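/- For every integer q ≥ 2, among the pairs (α, c) with α a unit of Z_q and c ∈ S_2(q), the corresponding codewords (α, c + α·𝟏, c + 2α·𝟏, …, c + (q−1)α·𝟏) of M_{3,2}(q) realize the following weights with the following multiplicities: exactly φ(q) pairs give weight 1 + (q − 1)(q + 1); exactly d·φ(d)·φ(q) pairs give weight 1 + (q − 2)(q + 1) + q/d, for each divisor d of q with d ≠ 1 and d ≠ q; exactly (q·φ(q) + q − 1)·φ(q) pairs give weight 2 + (q − 2)(q + 1); and exactly (q(q − 1) − Σ_{d | q, d ≠ 1} d·φ(d))·φ(q) pairs give weight 1 + (q − 2)(q + 1), where φ is Euler's totient function. -/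

import Mathlib

/-- Hamming weight of a word over `ZMod q`: the number of nonzero coordinates. -/
def wt {q : ℕ} (l : List (ZMod q)) : ℕ := l.countP (fun x => decide (x ≠ 0))

/-- The word `(c, α, c + α·𝟏, c + 2α·𝟏, …, c + (q−1)α·𝟏)`, where `𝟏` is the
all-ones vector of the same length as `c`. -/
def simplexWord (q : ℕ) (α : ZMod q) (c : List (ZMod q)) : List (ZMod q) :=
  c ++ α :: (List.range (q - 1)).flatMap (fun i => c.map (fun x => x + ((i + 1 : ℕ) : ZMod q) * α))

/-- The `ZMod q`-Simplex code `S_k(q)` of dimension `k`, as a set of words (lists):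
`S_1(q) = ZMod q` (as length-1 words) and
`S_k(q) = {(c, α, c + α·𝟏, …, c + (q−1)α·𝟏) : c ∈ S_{k-1}(q), α ∈ ZMod q}`. -/
def simplex (q : ℕ) : ℕ → Set (List (ZMod q))
  | 0 => {[]}
  | k + 1 => {w | ∃ c ∈ simplex q k, ∃ α : ZMod q, w = simplexWord q α c}

/-- The word `(α, c + α·𝟏, c + 2α·𝟏, …, c + (q−1)α·𝟏)`. -/
def macWord (q : ℕ) (α : ZMod q) (c : List (ZMod q)) : List (ZMod q) :=
  α :: (List.range (q - 1)).flatMap (fun i => c.map (fun x => x + ((i + 1 : ℕ) : ZMod q) * α))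

/-- The `ZMod q`-MacDonald code `M_{k,k-1}(q)`, as a set of words:
`M_{k,k-1}(q) = {(α, c + α·𝟏, …, c + (q−1)α·𝟏) : α ∈ ZMod q, c ∈ S_{k-1}(q)}`. -/
def macdonald (q k : ℕ) : Set (List (ZMod q)) :=
  {w | ∃ α : ZMod q, ∃ c ∈ simplex q (k - 1), w = macWord q α c}

/-!
For a unit `α` the map `j ↦ x + j α` is a bijection of `ZMod q`, so each coordinate `x` of `c` is
nonzero in exactly `q - 1` of the `q` words `c, c + α𝟏, …, c + (q - 1)α𝟏`. As `c ∈ S_2(q)` has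
length `q + 1`, the MacDonald word of `(α, c)` has weight `1 + (q - 1)(q + 1) - wt c`, independently
of `α`; so each count is `φ(q)` times a count of the weight distribution of `S_2(q)`.
The word `(γ, β, γ + β, …, γ + (q - 1)β)` of `S_2(q)` has weight `[β ≠ 0] + q - #{k | γ + kβ = 0}`,
and there are `q / ord β` such `k` when `γ ∈ ⟨β⟩` and none otherwise. Since `ZMod q` has `φ(d)`
elements of order `d` for each `d ∣ q`, counting the pairs `(β, γ)` by the order of `β` gives the
multiplicities.
-/

open scoped Finset

section Weight

variable {q : ℕ}

@[simp] lemma wt_nil : wt ([] : List (ZMod q)) = 0 := rfl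

@[simp] lemma wt_cons (a : ZMod q) (l : List (ZMod q)) :
    wt (a :: l) = wt l + if a = 0 then 0 else 1 := by
  by_cases ha : a = 0 <;> simp [wt, ha]

@[simp] lemma wt_append (l l' : List (ZMod q)) : wt (l ++ l') = wt l + wt l' :=
  List.countP_append

lemma wt_flatMap_range (n : ℕ) (f : ℕ → List (ZMod q)) :
    wt ((List.range n).flatMap f) = ∑ i ∈ Finset.range n, wt (f i) := by
  induction n with
  | zero => rfl
  | succ n ih =>
    rw [List.range_succ, List.flatMap_append, wt_append, ih, Finset.sum_range_succ]
    simp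

end Weight

namespace ZMod

variable {q : ℕ} [NeZero q]

lemma sum_range_natCast {M : Type*} [AddCommMonoid M] (f : ZMod q → M) :
    ∑ i ∈ Finset.range q, f i = ∑ j, f j := by
  refine Finset.sum_nbij' (fun i => (i : ZMod q)) ZMod.val (by simp) (by simp [ZMod.val_lt])
    (fun i hi => ZMod.val_cast_of_lt (Finset.mem_range.mp hi)) (by simp) (fun _ _ => rfl)

lemma sum_eq_add_sum_range_pred {M : Type*} [AddCommMonoid M] (f : ZMod q → M) :
    ∑ j, f j = f 0 + ∑ i ∈ Finset.range (q - 1), f ((i + 1 : ℕ) : ZMod q) := by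
  have hq : Finset.range q = Finset.range (q - 1 + 1) := by rw [Nat.sub_one_add_one (NeZero.ne q)]
  rw [← sum_range_natCast, hq, Finset.sum_range_succ', add_comm]
  simp

lemma addOrderOf_dvd (β : ZMod q) : addOrderOf β ∣ q := by
  simpa using addOrderOf_dvd_card (x := β)

lemma div_addOrderOf_pos (β : ZMod q) : 0 < q / addOrderOf β :=
  Nat.div_pos (Nat.le_of_dvd (NeZero.pos q) (addOrderOf_dvd β)) (addOrderOf_pos β)

lemma range_mulRight (β : ZMod q) :
    (AddMonoidHom.mulRight β).range = AddSubgroup.zmultiples β := by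
  ext x
  simp only [AddMonoidHom.mem_range, AddMonoidHom.coe_mulRight, AddSubgroup.mem_zmultiples_iff]
  constructor
  · rintro ⟨a, rfl⟩
    exact ⟨(a.val : ℤ), by simp [zsmul_eq_mul]⟩
  · rintro ⟨n, rfl⟩
    exact ⟨n, by simp [zsmul_eq_mul]⟩

lemma card_ker_mulRight (β : ZMod q) :
    Nat.card (AddMonoidHom.mulRight β).ker = q / addOrderOf β := by
  have h := (AddMonoidHom.mulRight β).ker.card_mul_index
  rw [AddSubgroup.index_ker, range_mulRight, Nat.card_zmultiples, Nat.card_zmod] at h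
  exact (Nat.div_eq_of_eq_mul_left (addOrderOf_pos β) h.symm).symm

lemma card_filter_add_mul_eq_zero (β γ : ZMod q) :
    #{k : ZMod q | γ + k * β = 0}
      = if γ ∈ AddSubgroup.zmultiples β then q / addOrderOf β else 0 := by
  have hfiber : ∀ k : ZMod q, γ + k * β = 0 ↔ AddMonoidHom.mulRight β k = -γ := fun k => by
    rw [AddMonoidHom.mulRight_apply, eq_neg_iff_add_eq_zero, add_comm]
  simp_rw [hfiber]
  split_ifs with hγ
  · have hrange : -γ ∈ Set.range (AddMonoidHom.mulRight β) := by
      rw [← AddMonoidHom.coe_range, range_mulRight]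
      exact neg_mem hγ
    rw [AddMonoidHom.card_fiber_eq_of_mem_range _ hrange ⟨0, map_zero _⟩, ← card_ker_mulRight,
      ← Nat.card_eq_finsetCard]
    exact Nat.card_congr <| Equiv.subtypeEquivRight fun k => by
      rw [Finset.mem_filter, AddMonoidHom.mem_ker]
      simp
  · rw [Finset.card_eq_zero, Finset.filter_eq_empty_iff]
    rintro k - hk
    exact hγ (neg_neg γ ▸ neg_mem (range_mulRight β ▸ ⟨k, hk⟩))

lemma sum_addOrderOf {M : Type*} [AddCommMonoid M] (f : ℕ → M) :
    ∑ β : ZMod q, f (addOrderOf β) = ∑ d ∈ q.divisors, d.totient • f d := by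
  rw [← Finset.sum_fiberwise_of_maps_to (g := addOrderOf) (t := q.divisors)
    fun β _ => Nat.mem_divisors.mpr ⟨addOrderOf_dvd β, NeZero.ne q⟩]
  refine Finset.sum_congr rfl fun d hd => ?_
  rw [Finset.sum_congr rfl fun β hβ => by rw [(Finset.mem_filter.mp hβ).2], Finset.sum_const,
    IsAddCyclic.card_addOrderOf_eq_totient (by simpa using Nat.dvd_of_mem_divisors hd)]

lemma card_filter_mem_zmultiples (β : ZMod q) :
    #{γ : ZMod q | γ ∈ AddSubgroup.zmultiples β} = addOrderOf β := by
  rw [← Nat.card_zmultiples, ← Nat.card_eq_finsetCard]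
  exact Nat.card_congr (Equiv.subtypeEquivRight fun γ => by rw [Finset.mem_filter]; simp)

lemma card_filter_addOrderOf_mem_zmultiples (P : ℕ → Prop) [DecidablePred P] :
    #{t : ZMod q × ZMod q | P (addOrderOf t.1) ∧ t.2 ∈ AddSubgroup.zmultiples t.1}
      = ∑ d ∈ q.divisors with P d, d * d.totient := by
  calc _ = ∑ β : ZMod q, if P (addOrderOf β) then addOrderOf β else 0 := by
        rw [Finset.card_filter, Fintype.sum_prod_type]
        refine Finset.sum_congr rfl fun β _ => ?_
        split_ifs with h
        · simp only [h, true_and]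
          rw [← card_filter_mem_zmultiples β, Finset.card_filter]
        · simp [h]
    _ = _ := by
        rw [sum_addOrderOf (fun d => if P d then d else 0), Finset.sum_filter]
        refine Finset.sum_congr rfl fun d _ => ?_
        split_ifs <;> simp [mul_comm]

lemma ncard_setOf_isUnit : {α : ZMod q | IsUnit α}.ncard = q.totient := by
  rw [show {α : ZMod q | IsUnit α} = Set.range Units.val from Set.ext fun _ => Iff.rfl,
    Set.ncard_range_of_injective Units.val_injective, Nat.card_eq_fintype_card,
    ZMod.card_units_eq_totient]

end ZMod

lemma sum_ite_add_mul_eq_zero_of_isUnit {R : Type*} [Ring R] [Fintype R] [DecidableEq R] {α : R}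
    (hα : IsUnit α) (x : R) :
    ∑ j : R, (if x + j * α = 0 then 0 else 1) = Fintype.card R - 1 := by
  obtain ⟨u, rfl⟩ := hα
  rw [Fintype.sum_equiv (u.mulRight.trans (Equiv.addLeft x))
    (fun j => if x + j * u = 0 then 0 else 1) (fun y => if y = 0 then 0 else 1) fun _ => rfl]
  simp [Finset.sum_ite, Finset.filter_ne', Finset.card_univ]

section MacWord

variable {q : ℕ} {α : ZMod q}

lemma sum_wt_map_add_mul_add_wt [NeZero q] (hα : IsUnit α) (c : List (ZMod q)) :
    ∑ i ∈ Finset.range (q - 1), wt (c.map (· + ((i + 1 : ℕ) : ZMod q) * α)) + wt c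
      = (q - 1) * c.length := by
  induction c with
  | nil => simp
  | cons x c ih =>
    have hx := sum_ite_add_mul_eq_zero_of_isUnit hα x
    rw [ZMod.sum_eq_add_sum_range_pred, ZMod.card, zero_mul, add_zero] at hx
    simp only [List.map_cons, wt_cons, Finset.sum_add_distrib, List.length_cons]
    linarith

lemma wt_macWord_add_wt [Fact (1 < q)] (hα : IsUnit α) (c : List (ZMod q)) :
    wt (macWord q α c) + wt c = 1 + (q - 1) * c.length := by
  rw [macWord, wt_cons, if_neg hα.ne_zero, wt_flatMap_range, ← sum_wt_map_add_mul_add_wt hα c]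
  ring

end MacWord

section Simplex

variable {q : ℕ}

@[simp] lemma simplexWord_nil (γ : ZMod q) : simplexWord q γ [] = [γ] := by
  simp [simplexWord]

lemma simplex_two_eq_range :
    simplex q 2 = Set.range fun t : ZMod q × ZMod q => simplexWord q t.1 [t.2] := by
  ext w
  simp only [simplex, Set.mem_ofPred_eq, Set.mem_singleton_iff, Set.mem_range, Prod.exists]
  constructor
  · rintro ⟨c, ⟨-, rfl, γ, rfl⟩, β, rfl⟩
    exact ⟨β, γ, by rw [simplexWord_nil]⟩
  · rintro ⟨β, γ, rfl⟩
    exact ⟨[γ], ⟨[], rfl, γ, (simplexWord_nil γ).symm⟩, β, rfl⟩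

lemma simplexWord_singleton_injective :
    Function.Injective fun t : ZMod q × ZMod q => simplexWord q t.1 [t.2] := by
  rintro ⟨β, γ⟩ ⟨β', γ'⟩ h
  simp only [simplexWord, List.singleton_append, List.cons.injEq] at h
  exact Prod.ext h.2.1 h.1

section

variable [NeZero q]

lemma length_simplexWord (α : ZMod q) (c : List (ZMod q)) :
    (simplexWord q α c).length = q * c.length + 1 := by
  obtain ⟨n, rfl⟩ : ∃ n, q = n + 1 := ⟨q - 1, (Nat.sub_one_add_one (NeZero.ne q)).symm⟩
  simp [simplexWord, List.length_flatMap]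
  ring

lemma wt_simplexWord_singleton (β γ : ZMod q) :
    wt (simplexWord q β [γ]) = (if β = 0 then 0 else 1) +
      (q - if γ ∈ AddSubgroup.zmultiples β then q / addOrderOf β else 0) := by
  have hnz : ∑ k : ZMod q, (if γ + k * β = 0 then 0 else 1)
      = q - #{k : ZMod q | γ + k * β = 0} := by
    have hcard := Finset.card_filter_add_card_filter_not (s := Finset.univ)
      (fun k : ZMod q => γ + k * β = 0)
    rw [Finset.card_univ, ZMod.card] at hcard
    simp only [Finset.sum_ite, Finset.sum_const_zero, Finset.sum_const, smul_eq_mul, mul_one,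
      zero_add]
    omega
  rw [← ZMod.card_filter_add_mul_eq_zero, ← hnz, ZMod.sum_eq_add_sum_range_pred]
  simp [simplexWord, wt_flatMap_range]
  ring

lemma length_of_mem_simplex_two {c : List (ZMod q)} (hc : c ∈ simplex q 2) :
    c.length = q + 1 := by
  rw [simplex_two_eq_range] at hc
  obtain ⟨t, rfl⟩ := hc
  simp [length_simplexWord]

variable {β γ : ZMod q}

lemma wt_simplexWord_singleton_eq_zero_iff :
    wt (simplexWord q β [γ]) = 0 ↔ β = 0 ∧ γ = 0 := by
  rw [wt_simplexWord_singleton]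
  by_cases hβ : β = 0
  · subst hβ
    have := NeZero.pos q
    by_cases hγ : γ = 0 <;> simp [hγ]; omega
  · simp [hβ]

lemma wt_simplexWord_singleton_eq_of_dvd_iff {d : ℕ} (hd : d ∣ q) (hd1 : d ≠ 1) (hdq : d ≠ q) :
    wt (simplexWord q β [γ]) = q + 1 - q / d ↔
      addOrderOf β = d ∧ γ ∈ AddSubgroup.zmultiples β := by
  have hq := NeZero.ne q
  have hqd : q / d ≠ 1 := fun h => hdq <| by
    rwa [← Nat.div_self (NeZero.pos q), Nat.div_eq_iff_eq_of_dvd_dvd hq hd dvd_rfl] at h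
  have : 0 < q / d :=
    Nat.div_pos (Nat.le_of_dvd (NeZero.pos q) hd) (Nat.pos_of_dvd_of_pos hd (NeZero.pos q))
  have : q / d ≤ q := Nat.div_le_self q d
  rw [wt_simplexWord_singleton]
  by_cases hβ : β = 0
  · subst hβ
    by_cases hγ : γ = 0 <;> simp [hγ, Ne.symm hd1] <;> omega
  · have := ZMod.div_addOrderOf_pos β
    have : q / addOrderOf β ≤ q := Nat.div_le_self q _
    by_cases hγ : γ ∈ AddSubgroup.zmultiples β
    · simp only [hβ, hγ, if_false, if_true, and_true,
        ← Nat.div_eq_iff_eq_of_dvd_dvd hq (ZMod.addOrderOf_dvd β) hd]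
      omega
    · simp only [hβ, hγ, if_false, and_false, iff_false]
      omega

lemma wt_simplexWord_singleton_eq_succ_iff :
    wt (simplexWord q β [γ]) = q + 1 ↔ β ≠ 0 ∧ γ ∉ AddSubgroup.zmultiples β := by
  rw [wt_simplexWord_singleton]
  by_cases hβ : β = 0
  · subst hβ
    by_cases hγ : γ = 0 <;> simp [hγ]
  · have := ZMod.div_addOrderOf_pos β
    have := Nat.div_le_self q (addOrderOf β)
    by_cases hγ : γ ∈ AddSubgroup.zmultiples β
    · simp only [hβ, hγ, if_false, if_true, not_true_eq_false, and_false, iff_false]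
      omega
    · simp [hβ, hγ, add_comm]

end

lemma wt_simplexWord_singleton_eq_self_iff [Fact (1 < q)] {β γ : ZMod q} :
    wt (simplexWord q β [γ]) = q ↔
      (β = 0 ∧ γ ≠ 0) ∨ (addOrderOf β = q ∧ γ ∈ AddSubgroup.zmultiples β) := by
  have hq := NeZero.ne q
  have : 1 < q := Fact.out
  rw [wt_simplexWord_singleton]
  by_cases hβ : β = 0
  · subst hβ
    by_cases hγ : γ = 0 <;> simp [hγ]; omega
  · have := ZMod.div_addOrderOf_pos β
    by_cases hγ : γ ∈ AddSubgroup.zmultiples β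
    · simp only [hβ, hγ, if_false, if_true, false_and, false_or, and_true,
        ← Nat.div_eq_iff_eq_of_dvd_dvd hq (ZMod.addOrderOf_dvd β) dvd_rfl,
        Nat.div_self (NeZero.pos q)]
      omega
    · simp only [hβ, hγ, if_false, false_and, and_false, or_false, iff_false]
      omega

end Simplex

section WeightDistribution

variable {q : ℕ}

section

variable [NeZero q]

lemma ncard_simplex_two_wt_eq_card_filter (m : ℕ) :
    {c ∈ simplex q 2 | wt c = m}.ncard
      = #{t : ZMod q × ZMod q | wt (simplexWord q t.1 [t.2]) = m} := by
  have hset : {c ∈ simplex q 2 | wt c = m}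
      = (fun t : ZMod q × ZMod q => simplexWord q t.1 [t.2]) ''
          ↑(Finset.univ.filter fun t : ZMod q × ZMod q => wt (simplexWord q t.1 [t.2]) = m) := by
    ext c
    simp only [simplex_two_eq_range, Set.mem_range, Set.mem_image,
      Finset.coe_filter, Finset.mem_univ, true_and, Set.mem_ofPred_eq]
    constructor
    · rintro ⟨⟨t, rfl⟩, h⟩
      exact ⟨t, h, rfl⟩
    · rintro ⟨t, h, rfl⟩
      exact ⟨⟨t, rfl⟩, h⟩
  rw [hset, Set.ncard_image_of_injective _ simplexWord_singleton_injective, Set.ncard_coe_finset]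

lemma ncard_simplex_two_wt_eq_zero : {c ∈ simplex q 2 | wt c = 0}.ncard = 1 := by
  rw [ncard_simplex_two_wt_eq_card_filter, Finset.card_eq_one]
  exact ⟨(0, 0), by ext ⟨β, γ⟩; simp [wt_simplexWord_singleton_eq_zero_iff]⟩

lemma ncard_simplex_two_wt_eq_of_dvd {d : ℕ} (hd : d ∣ q) (hd1 : d ≠ 1) (hdq : d ≠ q) :
    {c ∈ simplex q 2 | wt c = q + 1 - q / d}.ncard = d * d.totient := by
  simp_rw [ncard_simplex_two_wt_eq_card_filter, wt_simplexWord_singleton_eq_of_dvd_iff hd hd1 hdq,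
    ZMod.card_filter_addOrderOf_mem_zmultiples (· = d), Finset.filter_eq',
    if_pos (Nat.mem_divisors.mpr ⟨hd, NeZero.ne q⟩), Finset.sum_singleton]

lemma ncard_simplex_two_wt_eq_succ :
    {c ∈ simplex q 2 | wt c = q + 1}.ncard
      = q * (q - 1) - ∑ d ∈ q.divisors.filter (fun d => d ≠ 1), d * Nat.totient d := by
  have hsplit : (Finset.univ.filter fun t : ZMod q × ZMod q =>
        t.1 ≠ 0 ∧ t.2 ∉ AddSubgroup.zmultiples t.1)
      = (Finset.univ.filter fun t : ZMod q × ZMod q => t.1 ≠ 0) \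
          Finset.univ.filter fun t => addOrderOf t.1 ≠ 1 ∧ t.2 ∈ AddSubgroup.zmultiples t.1 := by
    ext t
    simp only [Finset.mem_filter, Finset.mem_sdiff, Finset.mem_univ, true_and, ne_eq,
      AddMonoid.addOrderOf_eq_one_iff]
    tauto
  have hsub : (Finset.univ.filter fun t : ZMod q × ZMod q =>
        addOrderOf t.1 ≠ 1 ∧ t.2 ∈ AddSubgroup.zmultiples t.1)
      ⊆ Finset.univ.filter fun t => t.1 ≠ 0 := by
    intro t
    simp only [Finset.mem_filter, Finset.mem_univ, true_and, ne_eq,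
      AddMonoid.addOrderOf_eq_one_iff]
    exact And.left
  have hne : #{t : ZMod q × ZMod q | t.1 ≠ 0} = q * (q - 1) := by
    have : (Finset.univ.filter fun t : ZMod q × ZMod q => t.1 ≠ 0)
        = Finset.univ.erase 0 ×ˢ Finset.univ := by
      ext
      simp
    rw [this, Finset.card_product, Finset.card_erase_of_mem (Finset.mem_univ _)]
    simp [mul_comm]
  simp_rw [ncard_simplex_two_wt_eq_card_filter, wt_simplexWord_singleton_eq_succ_iff, hsplit,
    Finset.card_sdiff_of_subset hsub, hne, ZMod.card_filter_addOrderOf_mem_zmultiples (· ≠ 1)]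

end

variable [Fact (1 < q)]

lemma ncard_simplex_two_wt_eq_self :
    {c ∈ simplex q 2 | wt c = q}.ncard = q * q.totient + q - 1 := by
  have hdisj : Disjoint (Finset.univ.filter fun t : ZMod q × ZMod q => t.1 = 0 ∧ t.2 ≠ 0)
      (Finset.univ.filter fun t => addOrderOf t.1 = q ∧ t.2 ∈ AddSubgroup.zmultiples t.1) :=
    Finset.disjoint_filter.mpr fun t _ h1 h2 => by
      rw [h1.1, addOrderOf_zero] at h2
      exact (Fact.out : 1 < q).ne h2.1
  have hzero : #{t : ZMod q × ZMod q | t.1 = 0 ∧ t.2 ≠ 0} = q - 1 := by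
    rw [← Finset.univ_product_univ, Finset.filter_product (· = 0) (· ≠ 0), Finset.card_product,
      Finset.filter_eq', Finset.filter_ne', Finset.card_erase_of_mem (Finset.mem_univ _)]
    simp
  simp_rw [ncard_simplex_two_wt_eq_card_filter, wt_simplexWord_singleton_eq_self_iff,
    Finset.filter_or, Finset.card_union_of_disjoint hdisj, hzero,
    ZMod.card_filter_addOrderOf_mem_zmultiples (· = q), Finset.filter_eq',
    if_pos (Nat.mem_divisors_self q (NeZero.ne q)), Finset.sum_singleton]
  have : 1 < q := Fact.out
  omega

lemma ncard_macWord_wt_eq_totient_mul {w m : ℕ} (hwm : w + m = 1 + (q - 1) * (q + 1)) :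
    {p : ZMod q × List (ZMod q) | IsUnit p.1 ∧ p.2 ∈ simplex q 2 ∧
        wt (macWord q p.1 p.2) = w}.ncard = q.totient * {c ∈ simplex q 2 | wt c = m}.ncard := by
  have hset : {p : ZMod q × List (ZMod q) | IsUnit p.1 ∧ p.2 ∈ simplex q 2 ∧
      wt (macWord q p.1 p.2) = w} = {α : ZMod q | IsUnit α} ×ˢ {c ∈ simplex q 2 | wt c = m} := by
    ext ⟨α, c⟩
    simp only [Set.mem_ofPred_eq, Set.mem_prod]
    refine and_congr_right fun hα => and_congr_right fun hc => ?_
    have := wt_macWord_add_wt hα c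
    rw [length_of_mem_simplex_two hc] at this
    omega
  rw [hset, Set.ncard_prod, ZMod.ncard_setOf_isUnit]

end WeightDistribution

/-- Among the pairs `(α, c)` with `α` a unit of `ZMod q` and `c ∈ S_2(q)`, the
codewords `(α, c + α·𝟏, …, c + (q−1)α·𝟏)` of `M_{3,2}(q)` realize: weight
`1 + (q − 1)(q + 1)` for exactly `φ(q)` pairs; weight `1 + (q − 2)(q + 1) + q/d` for
exactly `d·φ(d)·φ(q)` pairs, for each divisor `d` of `q` with `d ≠ 1, d ≠ q`; weight
`2 + (q − 2)(q + 1)` for exactly `(q·φ(q) + q − 1)·φ(q)` pairs; and weight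
`1 + (q − 2)(q + 1)` for exactly `(q(q − 1) − Σ_{d ∣ q, d ≠ 1} d·φ(d))·φ(q)` pairs. -/
theorem macdonald_three_two_unit_distribution (q : ℕ) (hq : 2 ≤ q) :
    ({p : ZMod q × List (ZMod q) | IsUnit p.1 ∧ p.2 ∈ simplex q 2 ∧
        wt (macWord q p.1 p.2) = 1 + (q - 1) * (q + 1)}).ncard = Nat.totient q ∧
    (∀ d : ℕ, d ∣ q → d ≠ 1 → d ≠ q →
      ({p : ZMod q × List (ZMod q) | IsUnit p.1 ∧ p.2 ∈ simplex q 2 ∧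
          wt (macWord q p.1 p.2) = 1 + (q - 2) * (q + 1) + q / d}).ncard
        = d * Nat.totient d * Nat.totient q) ∧
    ({p : ZMod q × List (ZMod q) | IsUnit p.1 ∧ p.2 ∈ simplex q 2 ∧
        wt (macWord q p.1 p.2) = 2 + (q - 2) * (q + 1)}).ncard
      = (q * Nat.totient q + q - 1) * Nat.totient q ∧
    ({p : ZMod q × List (ZMod q) | IsUnit p.1 ∧ p.2 ∈ simplex q 2 ∧
        wt (macWord q p.1 p.2) = 1 + (q - 2) * (q + 1)}).ncard
      = (q * (q - 1) - ∑ d ∈ q.divisors.filter (fun d => d ≠ 1), d * Nat.totient d)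
          * Nat.totient q := by
  have : Fact (1 < q) := ⟨hq⟩
  have hN : (q - 1) * (q + 1) = (q - 2) * (q + 1) + (q + 1) := by
    obtain ⟨r, rfl⟩ : ∃ r, q = r + 2 := ⟨q - 2, by omega⟩
    rw [show r + 2 - 1 = r + 1 by omega, Nat.add_sub_cancel]
    ring
  refine ⟨?_, fun d hd hd1 hdq => ?_, ?_, ?_⟩
  · rw [ncard_macWord_wt_eq_totient_mul (m := 0) (add_zero _), ncard_simplex_two_wt_eq_zero,
      mul_one]
  · have := Nat.div_le_self q d
    rw [ncard_macWord_wt_eq_totient_mul (m := q + 1 - q / d) (by omega),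
      ncard_simplex_two_wt_eq_of_dvd hd hd1 hdq, mul_comm]
  · rw [ncard_macWord_wt_eq_totient_mul (m := q) (by omega), ncard_simplex_two_wt_eq_self,
      mul_comm]
  · rw [ncard_macWord_wt_eq_totient_mul (m := q + 1) (by omega), ncard_simplex_two_wt_eq_succ,
      mul_comm]
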